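/- arXiv:1011.3619 — 2 statements merged into one kernel-verified Lean document; each statement's English description precedes it below -/
import Mathlib

section
/- Let C be a conjugacy class in S_d consisting of odd permutations. In the factorization semigroup S(S_d, C), the element c = s̄_{(1,2)}² · s̄_{(2,3)}² · … · s̄_{(d-1,d)}², where each s̄_{(i,i+1)} ∈ S(S_d,C) satisfies α(s̄_{(i,i+1)}) = (i,i+1), has α(c) = 1 and is fixed by the conjugation action ρ(σ) for every σ ∈ S_d. -/
/-- `O` is invariant under conjugation. -/
def ConjInvariant {G : Type*} [Group G] (O : Set G) : Prop :=
  ∀ g a : G, a ∈ O → g * a * g⁻¹ ∈ O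

/-- The elementary (Hurwitz) relation `x_{g₁} x_{g₂} ~ x_{g₁ g₂ g₁⁻¹} x_{g₁}`
on words in the alphabet `{x_g : g ∈ O}`.  Together with symmetry and
transitivity it also yields `x_{g₁} x_{g₂} ~ x_{g₂} x_{g₂⁻¹ g₁ g₂}`. -/
def factorRel {G : Type*} [Group G] (O : Set G) :
    FreeMonoid O → FreeMonoid O → Prop := fun w w' =>
  ∃ (g₁ g₂ : O) (h : (g₁ : G) * g₂ * (g₁ : G)⁻¹ ∈ O),
    w = FreeMonoid.of g₁ * FreeMonoid.of g₂ ∧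
    w' = FreeMonoid.of (⟨(g₁ : G) * g₂ * (g₁ : G)⁻¹, h⟩ : O) * FreeMonoid.of g₁

/-- The congruence generated by the Hurwitz relations. -/
def factorCon {G : Type*} [Group G] (O : Set G) : Con (FreeMonoid O) :=
  conGen (factorRel O)

/-- The factorization semigroup `S(G,O)` of the equipped group `(G,O)`. -/
abbrev FactorSgp {G : Type*} [Group G] (O : Set G) := (factorCon O).Quotient

/-- The generator `x_g` of `S(G,O)`, for `g ∈ O`. -/
def xg {G : Type*} [Group G] (O : Set G) (g : O) : FactorSgp O :=
  (factorCon O).mk' (FreeMonoid.of g)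

/-! Conjugation by `a` in `S(G,O)` realises the action of `α a`: `a * b = ρ (α a) b * a`, and
`ρ (α a)` fixes `a`. Hence an element `c` with `α c = 1` is central, so a factor `x ^ 2` of `c`
can be moved to the front, `c = x * (x * r)`; both `x` and `x * r` are fixed by `ρ (α x)`, the
latter because `α (x * r) = (α x)⁻¹`. For the element `c` of the theorem this shows that `c` is
fixed by every adjacent transposition, and these generate `S_d`. -/

theorem map_list_prod_eq_one {M N : Type*} [Monoid M] [Monoid N] (f : M →* N) {L : List M}
    (hL : ∀ y ∈ L, f y = 1) : f L.prod = 1 := by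
  rw [map_list_prod]
  exact List.prod_eq_one (List.forall_mem_map.2 hL)

namespace FactorSgp

variable {G : Type*} [Group G] {O : Set G}

theorem closure_range_xg : Submonoid.closure (Set.range (xg O)) = ⊤ :=
  PresentedMonoid.closure_range_of (factorRel O)

@[elab_as_elim]
theorem mul_induction {P : FactorSgp O → Prop} (s : FactorSgp O) (generator : ∀ g, P (xg O g))
    (one : P 1) (mul : ∀ x y, P x → P y → P (x * y)) : P s := by
  have hs : s ∈ Submonoid.closure (Set.range (xg O)) := by
    rw [closure_range_xg]
    exact Submonoid.mem_top s
  induction hs using Submonoid.closure_induction with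
  | mem _ hg => obtain ⟨g, rfl⟩ := hg; exact generator g
  | one => exact one
  | mul x y _ _ hx hy => exact mul x y hx hy

theorem xg_mul_xg (hO : ConjInvariant O) (g h : O) :
    xg O g * xg O h = xg O ⟨g * h * (g : G)⁻¹, hO g h h.2⟩ * xg O g :=
  (factorCon O).eq.2 (ConGen.Rel.of _ _ ⟨g, h, hO g h h.2, rfl, rfl⟩)

variable {hO : ConjInvariant O} {ρ : G →* MulAut (FactorSgp O)}
  (hρ : ∀ (g : G) (a : O), ρ g (xg O a) = xg O ⟨g * a * g⁻¹, hO g a a.2⟩)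
include hρ

theorem xg_mul_eq_rho_mul (g : O) (b : FactorSgp O) : xg O g * b = ρ g b * xg O g := by
  induction b using mul_induction with
  | generator h => rw [xg_mul_xg hO, hρ]
  | one => simp
  | mul x y hx hy => rw [← mul_assoc, hx, mul_assoc, hy, map_mul, mul_assoc]

variable {α : FactorSgp O →* G} (hα : ∀ g : O, α (xg O g) = g)
include hα

theorem mul_eq_rho_alpha_mul (a b : FactorSgp O) : a * b = ρ (α a) b * a := by
  induction a using mul_induction generalizing b with
  | generator g => rw [hα, xg_mul_eq_rho_mul hρ]
  | one => simp
  | mul x y hx hy =>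
    rw [mul_assoc, hy, ← mul_assoc, hx, map_mul, map_mul, MulAut.mul_apply, mul_assoc]

theorem commute_of_alpha_eq_one {b : FactorSgp O} (hb : α b = 1) (a : FactorSgp O) :
    Commute a b := by
  rw [Commute, SemiconjBy, mul_eq_rho_alpha_mul hρ hα b a, hb, map_one, MulAut.one_apply]

theorem rho_alpha_apply_self (a : FactorSgp O) : ρ (α a) a = a := by
  induction a using mul_induction with
  | generator g => rw [hα, hρ]; congr; group
  | one => simp
  | mul x y hx hy =>
    calc ρ (α (x * y)) (x * y) = ρ (α x) (ρ (α y) x * y) := by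
          rw [map_mul α, map_mul ρ, MulAut.mul_apply, map_mul (ρ (α y)), hy]
      _ = ρ (α x) y * x := by rw [← mul_eq_rho_alpha_mul hρ hα, map_mul, hx]
      _ = x * y := (mul_eq_rho_alpha_mul hρ hα x y).symm

theorem rho_alpha_apply_sq_mul {x r : FactorSgp O} (h : α (x ^ 2 * r) = 1) :
    ρ (α x) (x ^ 2 * r) = x ^ 2 * r := by
  have hxr : α (x * r) = (α x)⁻¹ := by
    rw [sq, mul_assoc, map_mul] at h
    exact eq_inv_of_mul_eq_one_right h
  have hfix : ρ (α x) (x * r) = x * r := by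
    conv_lhs => rw [← rho_alpha_apply_self hρ hα (x * r), hxr]
    simp
  rw [sq, mul_assoc, map_mul, rho_alpha_apply_self hρ hα, hfix]

theorem rho_alpha_apply_list_prod {L : List (FactorSgp O)} (hL : ∀ y ∈ L, α y = 1)
    {x : FactorSgp O} (hx : x ^ 2 ∈ L) : ρ (α x) L.prod = L.prod := by
  obtain ⟨s, t, rfl⟩ := List.mem_iff_append.1 hx
  have hcomm : s.prod * x ^ 2 = x ^ 2 * s.prod :=
    (commute_of_alpha_eq_one hρ hα (hL _ hx) s.prod).eq
  have hprod : (s ++ x ^ 2 :: t).prod = x ^ 2 * (s.prod * t.prod) := by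
    rw [List.prod_append, List.prod_cons, ← mul_assoc, hcomm, mul_assoc]
  rw [hprod]
  exact rho_alpha_apply_sq_mul hρ hα (hprod ▸ map_list_prod_eq_one α hL)

end FactorSgp

/-- For a conjugacy class `C` of an odd permutation, the element
`c = s̄₍₁,₂₎² · s̄₍₂,₃₎² ⋯ s̄₍d₋₁,d₎²` with `α(s̄₍i,i+1₎) = (i,i+1)` satisfies
`α(c) = 1` and is fixed by the conjugation action of all of `S_d`. -/
theorem central_element_fixed (d : ℕ) (hd : 2 ≤ d)
    (C : Set (Equiv.Perm (Fin d)))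
    (hCinv : ConjInvariant C)
    (α : FactorSgp C →* Equiv.Perm (Fin d)) (hα : ∀ g : C, α (xg C g) = g)
    (ρ : Equiv.Perm (Fin d) →* MulAut (FactorSgp C))
    (hρ : ∀ (g : Equiv.Perm (Fin d)) (a : C),
      ρ g (xg C a) = xg C ⟨g * a * g⁻¹, hCinv g a a.2⟩)
    (sb : Fin (d - 1) → FactorSgp C)
    (hsb : ∀ i : Fin (d - 1),
      α (sb i) = Equiv.swap ⟨i.1, by omega⟩ ⟨i.1 + 1, by omega⟩)
    (c : FactorSgp C) (hc : c = (List.ofFn fun i : Fin (d - 1) => (sb i) ^ 2).prod) :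
    α c = 1 ∧ ∀ τ : Equiv.Perm (Fin d), ρ τ c = c := by
  obtain ⟨n, rfl⟩ : ∃ n, d = n + 1 := ⟨d - 1, by omega⟩
  subst hc
  have hsq : ∀ y ∈ List.ofFn fun i : Fin n => sb i ^ 2, α y = 1 := by
    simp [List.mem_ofFn, hsb, sq]
  refine ⟨map_list_prod_eq_one α hsq, fun τ => ?_⟩
  have hτ : τ ∈ Submonoid.closure (Set.range fun i : Fin n => Equiv.swap i.castSucc i.succ) :=
    Equiv.Perm.mclosure_swap_castSucc_succ n ▸ Submonoid.mem_top τ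
  induction hτ using Submonoid.closure_induction with
  | mem _ hswap =>
    obtain ⟨i, rfl⟩ := hswap
    have := FactorSgp.rho_alpha_apply_list_prod hρ hα hsq (List.mem_ofFn.2 ⟨i, rfl⟩)
    rwa [hsb] at this
  | one => simp
  | mul x y _ _ hx hy => rw [map_mul, MulAut.mul_apply, hy, hx]
end

section
/- Let C be a conjugacy class of S_d and z ∈ S(S_d, C) an element with α(z) = (1,2) that is fixed by ρ(σ) for every σ in the centralizer Z of (1,2) in S_d. Then the orbit of z under the conjugation action ρ of S_d has at most d(d-1)/2 elements, and the map sending ρ(σ)(z) to the transposition σ(1,2)σ⁻¹ is a well-defined bijection from this orbit onto the set of transpositions of S_d. -/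
/-!
Since `α(ρ(σ) y) = σ α(y) σ⁻¹`, the map `y ↦ α y` sends the `ρ`-orbit of `z` onto the conjugacy
class of `(1,2)`, i.e. onto the transpositions. It is injective because `α(ρ(σ) z) = α(ρ(τ) z)`
forces `τ⁻¹σ` to centralize `(1,2)`, and such elements fix `z`. There are `d choose 2`
transpositions.
-/

namespace FactorSgp

variable {G : Type*} [Group G] {O : Set G}

theorem hom_ext {M : Type*} [Monoid M] {f g : FactorSgp O →* M}
    (h : ∀ a, f (xg O a) = g (xg O a)) : f = g :=
  Con.hom_ext (FreeMonoid.hom_eq h)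

theorem map_apply_eq_conj (hO : ConjInvariant O) {α : FactorSgp O →* G}
    (hα : ∀ a : O, α (xg O a) = a) {ρ : G →* MulAut (FactorSgp O)}
    (hρ : ∀ (g : G) (a : O), ρ g (xg O a) = xg O ⟨g * a * g⁻¹, hO g a a.2⟩)
    (g : G) (y : FactorSgp O) : α (ρ g y) = g * α y * g⁻¹ :=
  DFunLike.congr_fun
    (hom_ext (f := α.comp (ρ g).toMonoidHom) (g := (MulAut.conj g).toMonoidHom.comp α)
      fun a => by simp [hρ, hα]) y

end FactorSgp

section Orbit

variable {G M : Type*} [Group G] [Mul M] {ρ : G →* MulAut M} {α : M → G}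

theorem bijOn_range_setOf_isConj (hαρ : ∀ g y, α (ρ g y) = g * α y * g⁻¹) {z : M}
    (hz : ∀ g ∈ Subgroup.centralizer {α z}, ρ g z = z) :
    Set.BijOn α (Set.range fun g => ρ g z) {t | IsConj (α z) t} := by
  refine ⟨?_, ?_, ?_⟩
  · rintro _ ⟨g, rfl⟩
    exact isConj_iff.mpr ⟨g, (hαρ g z).symm⟩
  · rintro _ ⟨g, rfl⟩ _ ⟨h, rfl⟩ hgh
    have hcen : h⁻¹ * g ∈ Subgroup.centralizer {α z} := by
      rw [Subgroup.mem_centralizer_singleton_iff]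
      rw [hαρ, hαρ] at hgh
      calc h⁻¹ * g * α z = h⁻¹ * (g * α z * g⁻¹) * g := by group
        _ = h⁻¹ * (h * α z * h⁻¹) * g := by rw [hgh]
        _ = α z * (h⁻¹ * g) := by group
    calc ρ g z = ρ h (ρ (h⁻¹ * g) z) := by simp [map_mul]
      _ = ρ h z := by rw [hz _ hcen]
  · intro t ht
    obtain ⟨g, rfl⟩ := isConj_iff.mp ht
    exact ⟨ρ g z, ⟨g, rfl⟩, hαρ g z⟩

end Orbit

namespace Equiv.Perm

variable {α : Type*} [Fintype α] [DecidableEq α]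

theorem isConj_swap_iff_isSwap {a b : α} (hab : a ≠ b) {σ : Perm α} :
    IsConj (swap a b) σ ↔ σ.IsSwap := by
  rw [isConj_iff_cycleType_eq, isSwap_iff_cycleType.mp (swap_isSwap_iff.mpr hab),
    isSwap_iff_cycleType, eq_comm]

theorem card_isSwap_le : Nat.card {σ : Perm α // σ.IsSwap} ≤ (Fintype.card α).choose 2 := by
  let toSwap : {x : Sym2 α // ¬x.IsDiag} → {σ : Perm α // σ.IsSwap} := fun x =>
    ⟨Sym2.lift ⟨swap, swap_comm⟩ x.1, by
      obtain ⟨x, hx⟩ := x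
      induction x using Sym2.ind with
      | _ a b => exact ⟨a, b, Sym2.mk_isDiag_iff.not.mp hx, rfl⟩⟩
  have hsurj : Function.Surjective toSwap := by
    rintro ⟨_, a, b, hab, rfl⟩
    exact ⟨⟨s(a, b), Sym2.mk_isDiag_iff.not.mpr hab⟩, rfl⟩
  calc Nat.card {σ : Perm α // σ.IsSwap}
      ≤ Nat.card {x : Sym2 α // ¬x.IsDiag} := Nat.card_le_card_of_surjective toSwap hsurj
    _ = (Fintype.card α).choose 2 := by
      rw [Nat.card_eq_fintype_card, Sym2.card_subtype_not_diag]

end Equiv.Perm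

/-- The orbit of an element `z` with `α(z) = (1,2)` fixed by the centralizer of
`(1,2)` has at most `d(d-1)/2` elements, and `ρ(σ)(z) ↦ σ(1,2)σ⁻¹` is a
well-defined bijection from this orbit onto the set of transpositions. -/
theorem orbit_bijects_transpositions (d : ℕ) (hd : 2 ≤ d)
    (C : Set (Equiv.Perm (Fin d)))
    (hCinv : ConjInvariant C)
    (α : FactorSgp C →* Equiv.Perm (Fin d)) (hα : ∀ g : C, α (xg C g) = g)
    (ρ : Equiv.Perm (Fin d) →* MulAut (FactorSgp C))
    (hρ : ∀ (g : Equiv.Perm (Fin d)) (a : C),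
      ρ g (xg C a) = xg C ⟨g * a * g⁻¹, hCinv g a a.2⟩)
    (z : FactorSgp C)
    (hz1 : α z = Equiv.swap (⟨0, by omega⟩ : Fin d) ⟨1, by omega⟩)
    (hz2 : ∀ τ ∈ Subgroup.centralizer
      {Equiv.swap (⟨0, by omega⟩ : Fin d) ⟨1, by omega⟩}, ρ τ z = z) :
    Nat.card (Set.range fun τ : Equiv.Perm (Fin d) => ρ τ z) ≤ d * (d - 1) / 2 ∧
    ∃ f : (Set.range fun τ : Equiv.Perm (Fin d) => ρ τ z) ≃
        {g : Equiv.Perm (Fin d) // g.IsSwap},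
      ∀ τ : Equiv.Perm (Fin d),
        (f ⟨ρ τ z, τ, rfl⟩ : Equiv.Perm (Fin d)) =
          τ * Equiv.swap (⟨0, by omega⟩ : Fin d) ⟨1, by omega⟩ * τ⁻¹ := by
  have hαρ := FactorSgp.map_apply_eq_conj hCinv hα hρ
  have hbij := bijOn_range_setOf_isConj hαρ (z := z) (hz1 ▸ hz2)
  let f := (hbij.equiv α).trans <| Equiv.subtypeEquivRight fun σ => by
    rw [Set.mem_ofPred_eq, hz1, Equiv.Perm.isConj_swap_iff_isSwap (by simp [Fin.ext_iff])]
  refine ⟨?_, f, fun τ => ?_⟩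
  · calc Nat.card (Set.range fun τ : Equiv.Perm (Fin d) => ρ τ z)
        = Nat.card {g : Equiv.Perm (Fin d) // g.IsSwap} := Nat.card_congr f
      _ ≤ (Fintype.card (Fin d)).choose 2 := Equiv.Perm.card_isSwap_le
      _ = d * (d - 1) / 2 := by rw [Fintype.card_fin, Nat.choose_two_right]
  · show α (ρ τ z) = _
    rw [hαρ, hz1]
end
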